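/- arXiv:1402.0660 — 4 statements merged into one kernel-verified Lean document; each statement's English description precedes it below -/
import Mathlib

section
/- Let A and B be Hermitian complex n×n matrices. Then ‖exp(iA) − exp(iB)‖ ≤ ‖A − B‖, where exp is the matrix exponential and ‖·‖ is the operator norm (largest singular value). -/
/-!
Along `t ↦ exp (t • a) * exp (t • -b)` the derivative is `exp (t • a) * (a - b) * exp (t • -b)`.
For skew-adjoint `a`, `b` both exponentials are unitary, so this derivative has norm exactly
`‖a - b‖`, and the mean value inequality gives `‖exp a * exp (-b) - 1‖ ≤ ‖a - b‖`; multiplying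
on the right by the unitary `exp b` yields `‖exp a - exp b‖ ≤ ‖a - b‖`. For Hermitian matrices
apply this to `I • A` and `I • B` in the C⋆-algebra of matrices with the L² operator norm.
-/

open NormedSpace

/-- The operator norm of a complex square matrix (largest singular value),
    i.e. the norm of the associated operator on Euclidean space. -/
noncomputable def opNorm {n : ℕ} (A : Matrix (Fin n) (Fin n) ℂ) : ℝ :=
  ‖Matrix.toEuclideanCLM (𝕜 := ℂ) A‖

theorem hasDerivAt_exp_smul_mul_exp_smul_neg {E : Type*} [NormedRing E] [NormedAlgebra ℝ E]
    [CompleteSpace E] (a b : E) (t : ℝ) :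
    HasDerivAt (fun s : ℝ => exp (s • a) * exp (s • -b))
      (exp (t • a) * (a - b) * exp (t • -b)) t := by
  convert (hasDerivAt_exp_smul_const a t).fun_mul (hasDerivAt_exp_smul_const' (-b) t) using 1
  noncomm_ring

section ComplexStarAlgebra

variable {E : Type*} [NormedRing E] [NormedAlgebra ℂ E] [CompleteSpace E]
  [StarRing E] [StarModule ℂ E] [ContinuousStar E]

theorem exp_real_smul_mem_unitary {x : E} (hx : x ∈ skewAdjoint E) (t : ℝ) :
    exp (t • x) ∈ unitary E := by
  let +nondep : NormedAlgebra ℚ E := .restrictScalars ℚ ℂ E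
  refine exp_mem_unitary_of_mem_skewAdjoint ?_
  rw [skewAdjoint.mem_iff, ← Complex.coe_smul, star_smul, Complex.star_def, Complex.conj_ofReal,
    skewAdjoint.mem_iff.mp hx, smul_neg]

variable [CStarRing E]

theorem norm_exp_sub_exp_le_of_mem_skewAdjoint {a b : E} (ha : a ∈ skewAdjoint E)
    (hb : b ∈ skewAdjoint E) : ‖exp a - exp b‖ ≤ ‖a - b‖ := by
  let +nondep : NormedAlgebra ℚ E := .restrictScalars ℚ ℂ E
  have hmvt : ‖exp a * exp (-b) - 1‖ ≤ ‖a - b‖ := by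
    simpa using norm_image_sub_le_of_norm_deriv_le_segment_01'
      (fun t _ => (hasDerivAt_exp_smul_mul_exp_smul_neg a b t).hasDerivWithinAt)
      (fun t _ => by
        rw [CStarRing.norm_mul_mem_unitary _ (exp_real_smul_mem_unitary (neg_mem hb) t),
          CStarRing.norm_mem_unitary_mul _ (exp_real_smul_mem_unitary ha t)])
  calc ‖exp a - exp b‖ = ‖(exp a * exp (-b) - 1) * exp b‖ := by
        rw [sub_mul, mul_assoc, ← exp_add_of_commute (Commute.refl b).neg_left, neg_add_cancel,
          exp_zero, mul_one, one_mul]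
    _ = ‖exp a * exp (-b) - 1‖ :=
        CStarRing.norm_mul_mem_unitary _ (exp_mem_unitary_of_mem_skewAdjoint hb)
    _ ≤ ‖a - b‖ := hmvt

theorem norm_exp_I_smul_sub_exp_I_smul_le {a b : E} (ha : IsSelfAdjoint a)
    (hb : IsSelfAdjoint b) :
    ‖exp (Complex.I • a) - exp (Complex.I • b)‖ ≤ ‖a - b‖ := by
  simpa only [← smul_sub, norm_smul, Complex.norm_I, one_mul] using
    norm_exp_sub_exp_le_of_mem_skewAdjoint
      (ha.smul_mem_skewAdjoint Complex.conj_I) (hb.smul_mem_skewAdjoint Complex.conj_I)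

end ComplexStarAlgebra

/-- For Hermitian `A`, `B`: `‖exp(iA) - exp(iB)‖ ≤ ‖A - B‖` in operator norm. -/
theorem stmt4 {n : ℕ} (A B : Matrix (Fin n) (Fin n) ℂ)
    (hA : A.IsHermitian) (hB : B.IsHermitian) :
    opNorm (NormedSpace.exp (Complex.I • A) - NormedSpace.exp (Complex.I • B)) ≤
      opNorm (A - B) := by
  -- under these instances `‖M‖` is `opNorm M` by definition (`Matrix.cstar_norm_def`)
  open scoped Matrix.Norms.L2Operator in
  exact norm_exp_I_smul_sub_exp_I_smul_le hA.isSelfAdjoint hB.isSelfAdjoint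
end

section
/- Let A be a Hermitian complex n×n matrix, B any complex n×n matrix, and x ∈ ℝ. Then ‖exp(iAx) B exp(−iAx) − B − i x [A, B]‖ ≤ 2 ‖A‖² ‖B‖ x², where [A, B] = AB − BA, exp is the matrix exponential, and ‖·‖ is the operator norm (largest singular value). (This is the second-order Taylor estimate underlying the density-matrix-exponentiation simulation step.) -/
open NormedSpace

theorem norm_lie_le {R : Type*} [NonUnitalNormedRing R] (a b : R) :
    ‖⁅a, b⁆‖ ≤ 2 * ‖a‖ * ‖b‖ :=
  calc ‖⁅a, b⁆‖ ≤ ‖a * b‖ + ‖b * a‖ := by rw [Ring.lie_def]; exact norm_sub_le _ _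
    _ ≤ ‖a‖ * ‖b‖ + ‖b‖ * ‖a‖ := add_le_add (norm_mul_le a b) (norm_mul_le b a)
    _ = 2 * ‖a‖ * ‖b‖ := by ring

theorem CStarRing.norm_le_one_of_mem_unitary {E : Type*} [NormedRing E] [StarRing E]
    [CStarRing E] {U : E} (hU : U ∈ unitary E) : ‖U‖ ≤ 1 := by
  rcases subsingleton_or_nontrivial E with _ | _
  · simp [Subsingleton.elim U 0]
  · exact (CStarRing.norm_of_mem_unitary hU).le

section ExpConj

variable {𝔸 : Type*} [NormedRing 𝔸] [NormedAlgebra ℝ 𝔸]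

noncomputable def expConj (s c : 𝔸) (t : ℝ) : 𝔸 :=
  exp (t • s) * c * exp (-(t • s))

@[simp]
theorem expConj_zero (s c : 𝔸) : expConj s c 0 = c := by
  simp [expConj]

theorem expConj_neg (s c : 𝔸) (t : ℝ) : expConj (-s) c (-t) = expConj s c t := by
  simp [expConj]

theorem norm_expConj_le {s : 𝔸} (hs : ∀ t : ℝ, ‖exp (t • s)‖ ≤ 1) (c : 𝔸) (t : ℝ) :
    ‖expConj s c t‖ ≤ ‖c‖ := by
  have hV : ‖exp (-(t • s))‖ ≤ 1 := by simpa [neg_smul] using hs (-t)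
  calc ‖expConj s c t‖ ≤ ‖exp (t • s)‖ * ‖c‖ * ‖exp (-(t • s))‖ := norm_mul₃_le
    _ ≤ 1 * ‖c‖ * 1 := by gcongr; exact hs t
    _ = ‖c‖ := by ring

variable [CompleteSpace 𝔸]

theorem hasDerivAt_expConj (s c : 𝔸) (t : ℝ) :
    HasDerivAt (expConj s c) (expConj s ⁅s, c⁆ t) t := by
  have hU : HasDerivAt (fun u : ℝ => exp (u • s)) (exp (t • s) * s) t :=
    hasDerivAt_exp_smul_const (𝕂 := ℝ) s t
  have hV : HasDerivAt (fun u : ℝ => exp (-(u • s))) (exp (-(t • s)) * -s) t := by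
    simpa only [smul_neg] using hasDerivAt_exp_smul_const (𝕂 := ℝ) (-s) t
  refine ((hU.mul_const c).mul hV).congr_deriv ?_
  have hsV : exp (-(t • s)) * s = s * exp (-(t • s)) :=
    (((Commute.refl s).smul_left t).neg_left.exp_left).eq
  simp only [expConj, Ring.lie_def]
  rw [mul_neg, hsV]
  noncomm_ring

variable {s : 𝔸} (hs : ∀ t : ℝ, ‖exp (t • s)‖ ≤ 1)
include hs

theorem norm_expConj_sub_le (c : 𝔸) (t : ℝ) : ‖expConj s c t - c‖ ≤ ‖⁅s, c⁆‖ * |t| := by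
  simpa [Real.norm_eq_abs] using
    (convex_univ : Convex ℝ Set.univ).norm_image_sub_le_of_norm_hasDerivWithin_le
      (fun u _ => (hasDerivAt_expConj s c u).hasDerivWithinAt)
      (fun u _ => norm_expConj_le hs ⁅s, c⁆ u) (Set.mem_univ 0) (Set.mem_univ t)

theorem norm_expConj_sub_sub_le_of_nonneg (c : 𝔸) {x : ℝ} (hx : 0 ≤ x) :
    ‖expConj s c x - c - x • ⁅s, c⁆‖ ≤ ‖⁅s, ⁅s, c⁆⁆‖ * x ^ 2 / 2 := by
  have hremainder (u : ℝ) : HasDerivAt (fun u => expConj s c u - c - u • ⁅s, c⁆)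
      (expConj s ⁅s, c⁆ u - ⁅s, c⁆) u := by
    refine ((hasDerivAt_expConj s c u).sub_const c).sub ?_
    simpa using (hasDerivAt_id u).smul_const ⁅s, c⁆
  have hbound (u : ℝ) : HasDerivAt (fun u => ‖⁅s, ⁅s, c⁆⁆‖ * u ^ 2 / 2) (‖⁅s, ⁅s, c⁆⁆‖ * u) u := by
    refine (((hasDerivAt_pow 2 u).const_mul _).div_const 2).congr_deriv ?_
    ring
  refine image_norm_le_of_norm_deriv_right_le_deriv_boundary
    (fun u _ => (hremainder u).continuousAt.continuousWithinAt)
    (fun u _ => (hremainder u).hasDerivWithinAt) (by simp) hbound (fun u hu => ?_)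
    (Set.right_mem_Icc.mpr hx)
  simpa [abs_of_nonneg hu.1] using norm_expConj_sub_le hs ⁅s, c⁆ u

theorem norm_expConj_sub_sub_le (c : 𝔸) (x : ℝ) :
    ‖expConj s c x - c - x • ⁅s, c⁆‖ ≤ ‖⁅s, ⁅s, c⁆⁆‖ * x ^ 2 / 2 := by
  rcases le_total 0 x with hx | hx
  · exact norm_expConj_sub_sub_le_of_nonneg hs c hx
  · have hs' : ∀ t : ℝ, ‖exp (t • -s)‖ ≤ 1 := fun t => by simpa using hs (-t)
    have hlie : ⁅-s, c⁆ = -⁅s, c⁆ := by simp only [Ring.lie_def]; noncomm_ring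
    have hlie₂ : ⁅-s, -⁅s, c⁆⁆ = ⁅s, ⁅s, c⁆⁆ := by simp only [Ring.lie_def]; noncomm_ring
    simpa [expConj_neg, hlie, hlie₂] using
      norm_expConj_sub_sub_le_of_nonneg hs' c (neg_nonneg.mpr hx)

end ExpConj

theorem norm_exp_smul_le_one_of_mem_skewAdjoint {E : Type*} [NormedRing E] [StarRing E]
    [CStarRing E] [NormedAlgebra ℝ E] [StarModule ℝ E] [CompleteSpace E] {s : E}
    (hs : s ∈ skewAdjoint E) (t : ℝ) : ‖exp (t • s)‖ ≤ 1 :=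
  let +nondep : NormedAlgebra ℚ E := .restrictScalars ℚ ℝ E
  CStarRing.norm_le_one_of_mem_unitary
    (exp_mem_unitary_of_mem_skewAdjoint (skewAdjoint.smul_mem t hs))

theorem IsSelfAdjoint.norm_exp_conj_sub_sub_le {E : Type*} [CStarAlgebra E] {a : E}
    (ha : IsSelfAdjoint a) (b : E) (x : ℝ) :
    ‖NormedSpace.exp ((Complex.I * x) • a) * b * NormedSpace.exp (-((Complex.I * x) • a)) - b -
        (Complex.I * x) • (a * b - b * a)‖ ≤ 2 * ‖a‖ ^ 2 * ‖b‖ * x ^ 2 := by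
  set s := Complex.I • a
  have hs : s ∈ skewAdjoint E := ha.smul_mem_skewAdjoint Complex.conj_I
  have hxs : (Complex.I * x) • a = x • s := by
    rw [mul_comm, mul_smul, Complex.coe_smul]
  have hxsb : (Complex.I * x) • (a * b - b * a) = x • ⁅s, b⁆ := by
    rw [mul_comm, mul_smul, Complex.coe_smul, Ring.lie_def, smul_sub, smul_mul_assoc, mul_smul_comm]
  have hsa : ‖s‖ = ‖a‖ := by simp [s, norm_smul]
  calc _ = ‖expConj s b x - b - x • ⁅s, b⁆‖ := by rw [hxs, hxsb, expConj]
    _ ≤ ‖⁅s, ⁅s, b⁆⁆‖ * x ^ 2 / 2 :=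
        norm_expConj_sub_sub_le (norm_exp_smul_le_one_of_mem_skewAdjoint hs) b x
    _ ≤ 2 * ‖s‖ * (2 * ‖s‖ * ‖b‖) * x ^ 2 / 2 := by
        gcongr
        exact (norm_lie_le _ _).trans (by gcongr; exact norm_lie_le _ _)
    _ = 2 * ‖a‖ ^ 2 * ‖b‖ * x ^ 2 := by rw [hsa]; ring

/-- Second-order Taylor estimate: for Hermitian `A`, any `B`, and `x ∈ ℝ`,
    `‖exp(iAx) B exp(−iAx) − B − i x [A,B]‖ ≤ 2 ‖A‖² ‖B‖ x²`. -/
theorem stmt7 {n : ℕ} (A B : Matrix (Fin n) (Fin n) ℂ)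
    (hA : A.IsHermitian) (x : ℝ) :
    opNorm (NormedSpace.exp ((Complex.I * x) • A) * B *
              NormedSpace.exp (-((Complex.I * x) • A)) -
            B - (Complex.I * x) • (A * B - B * A)) ≤
      2 * opNorm A ^ 2 * opNorm B * x ^ 2 := by
  open scoped Matrix.Norms.L2Operator in
  exact IsSelfAdjoint.norm_exp_conj_sub_sub_le hA.isSelfAdjoint B x
end

section
/- Let d and M be positive integers and p₁,…,p_d nonnegative reals with Σ_{j=1}^d p_j = 1. Set S₀ = 0, S_j = Σ_{l=1}^{j} p_l, M_j = ⌈M·S_j⌉ for 0 ≤ j ≤ d, and Z_j = M_j − M_{j−1} for 1 ≤ j ≤ d. Then every Z_j is a nonnegative integer, Σ_{j=1}^d Z_j = M, and for every j one has |√(Z_j/M) − √(p_j)| ≤ √(2/M); consequently Σ_{j=1}^d (√(Z_j/M) − √(p_j))² ≤ 2d/M. -/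
lemma sqrt_abs_sub (a b : ℝ) (ha : 0 ≤ a) (hb : 0 ≤ b) :
    |Real.sqrt a - Real.sqrt b| ≤ Real.sqrt |a - b| := by
  rcases le_total b a with h | h
  · rw [abs_of_nonneg (sub_nonneg.2 (Real.sqrt_le_sqrt h)),
      abs_of_nonneg (sub_nonneg.2 h)]
    have h1 := Real.sq_sqrt ha
    have h2 := Real.sq_sqrt hb
    have h3 := Real.sq_sqrt (sub_nonneg.2 h)
    have h4 : Real.sqrt b ≤ Real.sqrt a := Real.sqrt_le_sqrt h
    nlinarith [Real.sqrt_nonneg a, Real.sqrt_nonneg b, Real.sqrt_nonneg (a - b),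
      mul_nonneg (Real.sqrt_nonneg b) (Real.sqrt_nonneg (a - b))]
  · rw [abs_sub_comm, abs_sub_comm a b,
      abs_of_nonneg (sub_nonneg.2 (Real.sqrt_le_sqrt h)),
      abs_of_nonneg (sub_nonneg.2 h)]
    have h1 := Real.sq_sqrt ha
    have h2 := Real.sq_sqrt hb
    have h3 := Real.sq_sqrt (sub_nonneg.2 h)
    nlinarith [Real.sqrt_nonneg a, Real.sqrt_nonneg b, Real.sqrt_nonneg (b - a),
      mul_nonneg (Real.sqrt_nonneg a) (Real.sqrt_nonneg (b - a))]

/-- Discretization of a probability vector: with `S_j = Σ_{l≤j} p_l`,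
    `M_j = ⌈M·S_j⌉` and `Z_j = M_j − M_{j−1}`, each `Z_j` is a nonnegative
    integer, `Σ_j Z_j = M`, `|√(Z_j/M) − √p_j| ≤ √(2/M)` for every `j`, and
    `Σ_j (√(Z_j/M) − √p_j)² ≤ 2d/M`. -/
theorem stmt16 (d M : ℕ) (hd : 0 < d) (hM : 0 < M)
    (p : Fin d → ℝ) (hp : ∀ j, 0 ≤ p j) (hsum : ∑ j, p j = 1) :
    let S : ℕ → ℝ := fun j => ∑ l ∈ Finset.range j, if h : l < d then p ⟨l, h⟩ else 0
    let Mc : ℕ → ℤ := fun j => ⌈(M : ℝ) * S j⌉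
    let Z : Fin d → ℤ := fun j => Mc (j + 1) - Mc j
    (∀ j, 0 ≤ Z j) ∧
    (∑ j, Z j = M) ∧
    (∀ j, |Real.sqrt ((Z j : ℝ) / M) - Real.sqrt (p j)| ≤ Real.sqrt (2 / M)) ∧
    ∑ j, (Real.sqrt ((Z j : ℝ) / M) - Real.sqrt (p j)) ^ 2 ≤ 2 * d / M := by
  intro S Mc Z
  have hMR : (0 : ℝ) < M := by exact_mod_cast hM
  have hSstep : ∀ j : Fin d, S (j + 1) = S j + p j := by
    intro j
    simp only [S, Finset.sum_range_succ, dif_pos j.isLt]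
  -- Z bounds
  have hZub : ∀ j : Fin d, (Z j : ℝ) ≤ M * p j + 1 := by
    intro j
    have h1 : (Mc (j + 1) : ℝ) < (M : ℝ) * S (j + 1) + 1 := Int.ceil_lt_add_one _
    have h2 : (M : ℝ) * S j ≤ (Mc j : ℝ) := Int.le_ceil _
    have : (Z j : ℝ) = (Mc (j + 1) : ℝ) - (Mc j : ℝ) := by push_cast [Z]; ring
    rw [this, hSstep j] at *
    nlinarith
  have hZlb : ∀ j : Fin d, (M : ℝ) * p j - 1 ≤ (Z j : ℝ) := by
    intro j
    have h1 : (M : ℝ) * S (j + 1) ≤ (Mc (j + 1) : ℝ) := Int.le_ceil _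
    have h2 : (Mc j : ℝ) < (M : ℝ) * S j + 1 := Int.ceil_lt_add_one _
    have : (Z j : ℝ) = (Mc (j + 1) : ℝ) - (Mc j : ℝ) := by push_cast [Z]; ring
    rw [this, hSstep j] at *
    nlinarith
  have hZnonneg : ∀ j : Fin d, 0 ≤ Z j := by
    intro j
    have hS : S j ≤ S (j + 1) := by rw [hSstep j]; linarith [hp j]
    exact sub_nonneg.2 (Int.ceil_le_ceil (by nlinarith))
  -- key pointwise bound
  have hkey : ∀ j : Fin d,
      |Real.sqrt ((Z j : ℝ) / M) - Real.sqrt (p j)| ≤ Real.sqrt (2 / M) := by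
    intro j
    have hZn : (0 : ℝ) ≤ (Z j : ℝ) := by exact_mod_cast hZnonneg j
    have h := sqrt_abs_sub ((Z j : ℝ) / M) (p j) (div_nonneg hZn hMR.le) (hp j)
    refine h.trans (Real.sqrt_le_sqrt ?_)
    have e : (Z j : ℝ) / M - p j = ((Z j : ℝ) - M * p j) / M := by
      field_simp
    rw [e, abs_div, abs_of_pos hMR]
    gcongr
    rw [abs_le]
    constructor <;> nlinarith [hZlb j, hZub j]
  refine ⟨hZnonneg, ?_, hkey, ?_⟩
  · -- telescoping sum
    have htel : ∑ j : Fin d, Z j = Mc d - Mc 0 := by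
      rw [Fin.sum_univ_eq_sum_range (fun i => Mc (i + 1) - Mc i)]
      exact Finset.sum_range_sub Mc d
    have hS0 : S 0 = 0 := by simp [S]
    have hSd : S d = 1 := by
      rw [← hsum]
      show (∑ l ∈ Finset.range d, if h : l < d then p ⟨l, h⟩ else 0) = _
      rw [Finset.sum_range]
      exact Finset.sum_congr rfl fun j _ => by simp [dif_pos j.isLt]
    rw [htel]
    simp [Mc, hS0, hSd]
  · -- sum of squares
    have : ∀ j : Fin d,
        (Real.sqrt ((Z j : ℝ) / M) - Real.sqrt (p j)) ^ 2 ≤ 2 / M := by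
      intro j
      have h := hkey j
      have h2 : (0 : ℝ) ≤ 2 / M := by positivity
      calc (Real.sqrt ((Z j : ℝ) / M) - Real.sqrt (p j)) ^ 2
          = |Real.sqrt ((Z j : ℝ) / M) - Real.sqrt (p j)| ^ 2 := (sq_abs _).symm
        _ ≤ Real.sqrt (2 / M) ^ 2 := by
            exact pow_le_pow_left₀ (abs_nonneg _) h 2
        _ = 2 / M := Real.sq_sqrt h2
    calc ∑ j, (Real.sqrt ((Z j : ℝ) / M) - Real.sqrt (p j)) ^ 2
        ≤ ∑ _j : Fin d, (2 / M : ℝ) := Finset.sum_le_sum fun j _ => this j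
      _ = 2 * d / M := by
          rw [Finset.sum_const, Finset.card_univ, Fintype.card_fin, nsmul_eq_mul]
          ring
end

section
/- Let n, d be positive integers, F a real n×d matrix with FᵀF invertible, y ∈ ℝⁿ, and θ̂ = (FᵀF)⁻¹Fᵀy. Let G be a real n×d matrix with GᵀG = (1/d)·I_d, let g₁ ∈ ℝⁿ be the first column of G, let z = ‖θ̂‖·g₁, and let c = √(1 + ‖θ̂‖²/d). Define the 2n×2d block-diagonal matrix F′ = (1/√2)·diag(F, G) and y′ = (1/c)·(y, z) ∈ ℝ²ⁿ. Then (F′)ᵀF′ is invertible and ((F′)ᵀF′)⁻¹(F′)ᵀ y′ = (√2/c)·(θ̂, ‖θ̂‖e₁) ∈ ℝ²ᵈ, where e₁ is the first standard basis vector of ℝ^d. In particular, the (d+1)-th entry of the best-fit parameters of the augmented problem equals (√2/c)‖θ̂‖ ≥ 0. -/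
/-!
The normal equations of a block-diagonal design decouple into those of its blocks, and scaling
the design by `a` and the response by `b` scales the least-squares solution by `b / a`. The
auxiliary response `z = ‖θ̂‖ g₁ = G (‖θ̂‖ e₁)` lies in the column space of `G`, so the `G`-block
is fitted exactly by `‖θ̂‖ e₁`.
-/

open Matrix

noncomputable def leastSquares {K m k : Type*} [Field K] [Fintype m] [Fintype k] [DecidableEq k]
    (X : Matrix m k K) (v : m → K) : k → K :=
  (Xᵀ * X)⁻¹ *ᵥ (Xᵀ *ᵥ v)

theorem Matrix.inv_smul_of_field {K k : Type*} [Field K] [Fintype k] [DecidableEq k]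
    (a : K) (A : Matrix k k K) : (a • A)⁻¹ = a⁻¹ • A⁻¹ := by
  rcases eq_or_ne a 0 with rfl | ha
  · simp
  by_cases hA : IsUnit A.det
  · exact inv_smul' A (Units.mk0 a ha) hA
  · have hA' : ¬IsUnit (a • A).det := by
      simpa [det_smul, isUnit_iff_ne_zero, ha] using hA
    rw [nonsing_inv_apply_not_isUnit _ hA, nonsing_inv_apply_not_isUnit _ hA', smul_zero]

theorem Matrix.isUnit_transpose_mul_self_smul {K m k : Type*} [Field K] [Fintype m]
    [Fintype k] [DecidableEq k] {a : K} (ha : a ≠ 0) (X : Matrix m k K) :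
    IsUnit ((a • X)ᵀ * (a • X)) ↔ IsUnit (Xᵀ * X) := by
  rw [transpose_smul, Matrix.smul_mul, Matrix.mul_smul, smul_smul,
    ← Units.smul_mk0 (mul_ne_zero ha ha), isUnit_smul_iff]

theorem Matrix.transpose_fromBlocks_diag_mul_self {K m m' k k' : Type*} [Field K] [Fintype m]
    [Fintype m'] (A : Matrix m k K) (B : Matrix m' k' K) :
    (fromBlocks A 0 0 B)ᵀ * fromBlocks A 0 0 B = fromBlocks (Aᵀ * A) 0 0 (Bᵀ * B) := by
  simp [fromBlocks_transpose, fromBlocks_multiply]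

theorem Matrix.isUnit_transpose_fromBlocks_diag_mul_self {K m m' k k' : Type*} [Field K]
    [Fintype m] [Fintype m'] [Fintype k] [Fintype k'] [DecidableEq k] [DecidableEq k']
    (A : Matrix m k K) (B : Matrix m' k' K) :
    IsUnit ((fromBlocks A 0 0 B)ᵀ * fromBlocks A 0 0 B) ↔
      IsUnit (Aᵀ * A) ∧ IsUnit (Bᵀ * B) := by
  rw [transpose_fromBlocks_diag_mul_self, isUnit_fromBlocks_zero₂₁]

theorem Matrix.inv_fromBlocks_diag {K k k' : Type*} [Field K] [Fintype k] [Fintype k']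
    [DecidableEq k] [DecidableEq k'] {A : Matrix k k K} {D : Matrix k' k' K}
    (hA : IsUnit A) (hD : IsUnit D) :
    (fromBlocks A 0 0 D)⁻¹ = fromBlocks A⁻¹ 0 0 D⁻¹ := by
  simp [inv_fromBlocks_zero₂₁_of_isUnit_iff A 0 D (iff_of_true hA hD)]

theorem leastSquares_smul {K m k : Type*} [Field K] [Fintype m] [Fintype k] [DecidableEq k]
    (X : Matrix m k K) (v : m → K) (a b : K) :
    leastSquares (a • X) (b • v) = (b / a) • leastSquares X v := by
  rcases eq_or_ne a 0 with rfl | ha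
  · simp [leastSquares]
  simp only [leastSquares, transpose_smul, Matrix.smul_mul, Matrix.mul_smul, smul_smul,
    inv_smul_of_field, mulVec_smul, smul_mulVec]
  congr 1
  field_simp

theorem leastSquares_fromBlocks {K m m' k k' : Type*} [Field K] [Fintype m] [Fintype m']
    [Fintype k] [Fintype k'] [DecidableEq k] [DecidableEq k']
    {A : Matrix m k K} {B : Matrix m' k' K}
    (hA : IsUnit (Aᵀ * A)) (hB : IsUnit (Bᵀ * B)) (u : m → K) (v : m' → K) :
    leastSquares (fromBlocks A 0 0 B) (Sum.elim u v) =
      Sum.elim (leastSquares A u) (leastSquares B v) := by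
  rw [leastSquares, transpose_fromBlocks_diag_mul_self, inv_fromBlocks_diag hA hB,
    fromBlocks_transpose]
  simp [fromBlocks_mulVec, leastSquares]

theorem leastSquares_mulVec {K m k : Type*} [Field K] [Fintype m] [Fintype k] [DecidableEq k]
    {X : Matrix m k K} (hX : IsUnit (Xᵀ * X)) (w : k → K) :
    leastSquares X (X *ᵥ w) = w := by
  rw [leastSquares, mulVec_mulVec, mulVec_mulVec, Matrix.mul_assoc,
    nonsing_inv_mul _ ((isUnit_iff_isUnit_det _).mp hX), one_mulVec]

theorem stmt17_general (n d : ℕ) (hd : 0 < d)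
    (F G : Matrix (Fin n) (Fin d) ℝ)
    (hF : IsUnit (Fᵀ * F))
    (hG : Gᵀ * G = ((d : ℝ))⁻¹ • (1 : Matrix (Fin d) (Fin d) ℝ))
    (y : Fin n → ℝ) :
    let θ := (Fᵀ * F)⁻¹ *ᵥ (Fᵀ *ᵥ y)
    let t := ‖(show EuclideanSpace ℝ (Fin d) from WithLp.toLp 2 θ)‖
    let g₁ : Fin n → ℝ := fun i => G i ⟨0, hd⟩
    let z : Fin n → ℝ := t • g₁
    let c := Real.sqrt (1 + t ^ 2 / d)
    let F' : Matrix (Fin n ⊕ Fin n) (Fin d ⊕ Fin d) ℝ :=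
      (Real.sqrt 2)⁻¹ • Matrix.fromBlocks F 0 0 G
    let y' : Fin n ⊕ Fin n → ℝ := c⁻¹ • Sum.elim y z
    IsUnit (F'ᵀ * F') ∧
    (F'ᵀ * F')⁻¹ *ᵥ (F'ᵀ *ᵥ y') =
      (Real.sqrt 2 / c) •
        Sum.elim θ (fun j : Fin d => if j = ⟨0, hd⟩ then t else 0) ∧
    ((F'ᵀ * F')⁻¹ *ᵥ (F'ᵀ *ᵥ y')) (Sum.inr ⟨0, hd⟩) = Real.sqrt 2 / c * t ∧
    0 ≤ Real.sqrt 2 / c * t := by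
  intro θ t g₁ z c F' y'
  have hGG : IsUnit (Gᵀ * G) := by
    rw [hG, ← Units.smul_mk0 (inv_ne_zero (Nat.cast_ne_zero.2 hd.ne')), isUnit_smul_iff]
    exact isUnit_one
  have hz : z = G *ᵥ fun j => if j = ⟨0, hd⟩ then t else 0 := by
    ext i
    simp [z, g₁, mulVec, dotProduct, mul_comm]
  have hgram : IsUnit (F'ᵀ * F') := by
    rw [isUnit_transpose_mul_self_smul (by positivity),
      isUnit_transpose_fromBlocks_diag_mul_self]
    exact ⟨hF, hGG⟩
  have hfit : (F'ᵀ * F')⁻¹ *ᵥ (F'ᵀ *ᵥ y') =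
      (Real.sqrt 2 / c) • Sum.elim θ (fun j : Fin d => if j = ⟨0, hd⟩ then t else 0) := by
    change leastSquares ((Real.sqrt 2)⁻¹ • fromBlocks F 0 0 G) (c⁻¹ • Sum.elim y z) = _
    rw [leastSquares_smul, leastSquares_fromBlocks hF hGG, hz, leastSquares_mulVec hGG,
      inv_div_inv]
    rfl
  exact ⟨hgram, hfit, by simp [hfit], by positivity⟩

/-- Sign-fixing augmentation: with `θ̂ = (FᵀF)⁻¹Fᵀy`, `GᵀG = I_d/d`,
    `z = ‖θ̂‖·g₁` (`g₁` the first column of `G`), `c = √(1 + ‖θ̂‖²/d)`,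
    `F′ = (1/√2)·diag(F, G)` and `y′ = (1/c)·(y, z)`, the matrix `(F′)ᵀF′`
    is invertible and `((F′)ᵀF′)⁻¹(F′)ᵀy′ = (√2/c)·(θ̂, ‖θ̂‖e₁)`; in
    particular its `(d+1)`-th entry is `(√2/c)‖θ̂‖ ≥ 0`. -/
theorem stmt17 (n d : ℕ) (hn : 0 < n) (hd : 0 < d)
    (F G : Matrix (Fin n) (Fin d) ℝ)
    (hF : IsUnit (Fᵀ * F))
    (hG : Gᵀ * G = ((d : ℝ))⁻¹ • (1 : Matrix (Fin d) (Fin d) ℝ))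
    (y : Fin n → ℝ) :
    let θ := (Fᵀ * F)⁻¹ *ᵥ (Fᵀ *ᵥ y)
    let t := ‖(show EuclideanSpace ℝ (Fin d) from WithLp.toLp 2 θ)‖
    let g₁ : Fin n → ℝ := fun i => G i ⟨0, hd⟩
    let z : Fin n → ℝ := t • g₁
    let c := Real.sqrt (1 + t ^ 2 / d)
    let F' : Matrix (Fin n ⊕ Fin n) (Fin d ⊕ Fin d) ℝ :=
      (Real.sqrt 2)⁻¹ • Matrix.fromBlocks F 0 0 G
    let y' : Fin n ⊕ Fin n → ℝ := c⁻¹ • Sum.elim y z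
    IsUnit (F'ᵀ * F') ∧
    (F'ᵀ * F')⁻¹ *ᵥ (F'ᵀ *ᵥ y') =
      (Real.sqrt 2 / c) •
        Sum.elim θ (fun j : Fin d => if j = ⟨0, hd⟩ then t else 0) ∧
    ((F'ᵀ * F')⁻¹ *ᵥ (F'ᵀ *ᵥ y')) (Sum.inr ⟨0, hd⟩) = Real.sqrt 2 / c * t ∧
    0 ≤ Real.sqrt 2 / c * t :=
  stmt17_general n d hd F G hF hG y
end
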